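/- arXiv:1312.0274 — 4 statements merged into one kernel-verified Lean document; each statement's English description precedes it below -/
import Mathlib

section
/- In a Hamiltonian graph consisting of a Hamiltonian cycle plus k chords, for any fixed subset K of the chords there are at most 2 cycles whose chord set is exactly K. Consequently, the total number of cycles in the graph is at most 2^{k+1} − 1. -/
open SimpleGraph

/-- `G` has a cycle of length `k`. -/
def HasCycleLength {V : Type*} (G : SimpleGraph V) (k : ℕ) : Prop :=
  ∃ (v : V) (w : G.Walk v v), w.IsCycle ∧ w.length = k

/-- A graph on a finite vertex type is pancyclic if it has a cycle of every
length `k` with `3 ≤ k ≤ n`, where `n` is the number of vertices. -/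
def Pancyclic {V : Type*} [Fintype V] (G : SimpleGraph V) : Prop :=
  ∀ k : ℕ, 3 ≤ k → k ≤ Fintype.card V → HasCycleLength G k

/-- `m n` is the minimum number of edges of a pancyclic graph on `n` vertices. -/
noncomputable def m (n : ℕ) : ℕ :=
  sInf {e | ∃ G : SimpleGraph (Fin n), Pancyclic G ∧ G.edgeSet.ncard = e}

/-- The set of cycles of `G`, each cycle identified with its edge set. -/
def cycleSets {V : Type*} (G : SimpleGraph V) : Set (Set (Sym2 V)) :=
  {s | ∃ (v : V) (w : G.Walk v v), w.IsCycle ∧ s = {e | e ∈ w.edges}}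

/-!
The symmetric difference of two cycles is an even edge set: every vertex meets an even number of
its edges. If two cycles use the same chords, their symmetric difference lies inside the
Hamiltonian cycle `H`, and the only even edge sets inside a cycle are `∅` and the cycle itself.
Hence the cycles with a given chord set `K` are among `S` and `S ∆ H` for any one of them `S`,
and for `K = ∅` only `H` itself qualifies. Summing over the `2 ^ k` sets of chords bounds the
number of cycles by `1 + 2 (2 ^ k - 1)`.
-/

open scoped symmDiff

theorem List.IsChain.iff_of_mem {α : Type*} {p : α → Prop} {l : List α}
    (h : l.IsChain fun a b => p a ↔ p b) {a b : α} (ha : a ∈ l) (hb : b ∈ l) : p a ↔ p b := by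
  have hl : l ≠ [] := List.ne_nil_of_mem ha
  have key := h.induction (p · ↔ p (l.head hl)) l (fun _ _ hxy hx => hxy.symm.trans hx)
    (fun _ => Iff.rfl)
  exact (key a ha).trans (key b hb).symm

namespace Set

variable {α β : Type*}

theorem even_ncard_symmDiff {s t : Set α} (hs : s.Finite) (ht : t.Finite)
    (hs' : Even s.ncard) (ht' : Even t.ncard) : Even (s ∆ t).ncard := by
  have hsymm : (s ∆ t).ncard + (s ∩ t).ncard = (s ∪ t).ncard :=
    calc (s ∆ t).ncard + (s ∩ t).ncard = (s ∆ t ∪ s ∩ t).ncard :=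
          (ncard_union_eq (disjoint_symmDiff_inf s t) (hs.sdiff.union ht.sdiff)
            (hs.inter_of_left t)).symm
      _ = (s ∪ t).ncard := congrArg ncard (symmDiff_sup_inf s t)
  have hunion := ncard_union_add_ncard_inter s t hs ht
  rw [Nat.even_iff] at hs' ht' ⊢
  omega

theorem mem_iff_mem_of_subset_pair_of_even_ncard {s : Set α} {a b : α} (hs : s ⊆ {a, b})
    (he : Even s.ncard) : a ∈ s ↔ b ∈ s := by
  have eq_singleton : ∀ {a b : α}, s ⊆ {a, b} → a ∈ s → b ∉ s → s = {a} := fun hs ha hb =>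
    Subset.antisymm (fun y hy => (hs hy).elim id fun h => absurd (h ▸ hy) hb)
      (singleton_subset_iff.2 ha)
  constructor <;> intro h <;> by_contra h' <;> refine Nat.not_even_one ?_
  · rwa [eq_singleton hs h h', ncard_singleton] at he
  · rwa [eq_singleton (pair_comm a b ▸ hs) h h', ncard_singleton] at he

open _root_.Finset in
theorem ncard_le_two_mul_ncard_sub_one {s : Set α} {t : Set β} {f : α → β}
    (hs : s.Finite) (ht : t.Finite) (hf : MapsTo f s t) {b₀ : β} (hb₀ : b₀ ∈ t)
    (h₀ : {a ∈ s | f a = b₀}.ncard ≤ 1) (h : ∀ b ∈ t, {a ∈ s | f a = b}.ncard ≤ 2) :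
    s.ncard ≤ 2 * t.ncard - 1 := by
  classical
  obtain ⟨s, rfl⟩ := hs.exists_finset_coe
  obtain ⟨t, rfl⟩ := ht.exists_finset_coe
  simp only [← coe_filter, ncard_coe_finset, mem_coe] at hb₀ h₀ h ⊢
  have hpos := card_pos.2 ⟨b₀, hb₀⟩
  calc #s = #{a ∈ s | f a = b₀} + ∑ b ∈ t.erase b₀, #{a ∈ s | f a = b} := by
        rw [card_eq_sum_card_fiberwise hf, ← add_sum_erase t _ hb₀]
    _ ≤ 1 + ∑ _b ∈ t.erase b₀, 2 :=
        add_le_add h₀ (sum_le_sum fun b hb => h b (mem_of_mem_erase hb))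
    _ = 2 * #t - 1 := by
        rw [sum_const, card_erase_of_mem hb₀, smul_eq_mul]
        omega

end Set

variable {V : Type*} {G : SimpleGraph V}

def IsEvenEdgeSet (S : Set (Sym2 V)) : Prop := ∀ x : V, Even {e | e ∈ S ∧ x ∈ e}.ncard

theorem IsEvenEdgeSet.symmDiff {S T : Set (Sym2 V)} (hS : S.Finite) (hT : T.Finite)
    (hS' : IsEvenEdgeSet S) (hT' : IsEvenEdgeSet T) : IsEvenEdgeSet (S ∆ T) := by
  intro x
  have hinc : {e | e ∈ S ∆ T ∧ x ∈ e} = {e | e ∈ S ∧ x ∈ e} ∆ {e | e ∈ T ∧ x ∈ e} := by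
    ext e
    simp only [Set.mem_symmDiff, Set.mem_ofPred_eq]
    tauto
  rw [hinc]
  exact Set.even_ncard_symmDiff (hS.sep _) (hT.sep _) (hS' x) (hT' x)

namespace SimpleGraph.Walk

theorem ncard_setOf_mem_edges_and_mem {u v : V} (p : G.Walk u v) (x : V) :
    {e | e ∈ p.edges ∧ x ∈ e}.ncard = (p.toSubgraph.neighborSet x).ncard := by
  classical
  have hinc : {e | e ∈ p.edges ∧ x ∈ e} = p.toSubgraph.spanningCoe.incidenceSet x := by
    ext e
    simp [incidenceSet]
  rw [hinc, ← Nat.card_coe_set_eq, ← Nat.card_coe_set_eq,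
    Nat.card_congr (incidenceSetEquivNeighborSet _ x)]
  rfl

namespace IsCycle

variable {u : V} {c : G.Walk u u}

theorem ncard_setOf_mem_edges_and_mem (hc : c.IsCycle) {x : V} (hx : x ∈ c.support) :
    {e | e ∈ c.edges ∧ x ∈ e}.ncard = 2 := by
  rw [c.ncard_setOf_mem_edges_and_mem, hc.ncard_neighborSet_toSubgraph_eq_two hx]

theorem isEvenEdgeSet (hc : c.IsCycle) : IsEvenEdgeSet {e | e ∈ c.edges} := by
  intro x
  by_cases hx : x ∈ c.support
  · simp only [Set.mem_ofPred_eq, hc.ncard_setOf_mem_edges_and_mem hx, even_two]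
  · have hnbr : c.toSubgraph.neighborSet x = ∅ := Set.eq_empty_of_forall_notMem fun _ hy =>
      hx (c.mem_verts_toSubgraph.1 (c.toSubgraph.edge_vert hy))
    simp only [Set.mem_ofPred_eq, c.ncard_setOf_mem_edges_and_mem, hnbr, Set.ncard_empty]
    exact ⟨0, rfl⟩

theorem eq_empty_or_eq_of_isEvenEdgeSet (hc : c.IsCycle) {T : Set (Sym2 V)}
    (hTc : T ⊆ {e | e ∈ c.edges}) (hT : IsEvenEdgeSet T) : T = ∅ ∨ T = {e | e ∈ c.edges} := by
  -- `d.snd` lies on exactly the two cycle edges `d.edge` and `d'.edge`,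
  -- so the even set `T` contains both of them or neither.
  have hstep : ∀ d d', d ∈ c.darts → d' ∈ c.darts → G.DartAdj d d' →
      (d.edge ∈ T ↔ d'.edge ∈ T) := by
    intro d d' hd hd' hdd'
    by_cases heq : d.edge = d'.edge
    · rw [heq]
    have hx : d.snd ∈ d.edge := Sym2.mem_mk_right _ _
    have hx' : d.snd ∈ d'.edge := hdd' ▸ Sym2.mem_mk_left _ _
    have hpair : {e | e ∈ c.edges ∧ d.snd ∈ e} = {d.edge, d'.edge} := by
      refine (Set.eq_of_subset_of_ncard_le ?_ ?_
        ((List.finite_toSet _).subset fun _ he => he.1)).symm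
      · rintro e (rfl | rfl)
        exacts [⟨List.mem_map_of_mem hd, hx⟩, ⟨List.mem_map_of_mem hd', hx'⟩]
      · rw [hc.ncard_setOf_mem_edges_and_mem (c.dart_snd_mem_support_of_mem_darts hd),
          Set.ncard_pair heq]
    have hsub : {e | e ∈ T ∧ d.snd ∈ e} ⊆ {d.edge, d'.edge} :=
      hpair ▸ fun e he => ⟨hTc he.1, he.2⟩
    simpa [hx, hx'] using Set.mem_iff_mem_of_subset_pair_of_even_ncard hsub (hT d.snd)
  have hchain := c.isChain_dartAdj_darts.imp_of_mem_imp hstep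
  refine T.eq_empty_or_nonempty.imp id fun ⟨e, he⟩ => hTc.antisymm fun e' he' => ?_
  obtain ⟨d, hd, rfl⟩ := List.mem_map.1 (hTc he)
  obtain ⟨d', hd', rfl⟩ := List.mem_map.1 he'
  exact (hchain.iff_of_mem hd hd').1 he

end IsCycle

end SimpleGraph.Walk

section cycleSets

variable {S : Set (Sym2 V)}

theorem finite_of_mem_cycleSets (hS : S ∈ cycleSets G) : S.Finite := by
  obtain ⟨_, c, _, rfl⟩ := hS
  exact List.finite_toSet _

theorem nonempty_of_mem_cycleSets (hS : S ∈ cycleSets G) : S.Nonempty := by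
  obtain ⟨_, c, hc, rfl⟩ := hS
  obtain ⟨e, he⟩ := List.exists_mem_of_ne_nil _ (mt Walk.edges_eq_nil.1 hc.not_nil)
  exact ⟨e, he⟩

theorem subset_edgeSet_of_mem_cycleSets (hS : S ∈ cycleSets G) : S ⊆ G.edgeSet := by
  obtain ⟨_, c, _, rfl⟩ := hS
  exact fun _ he => c.edges_subset_edgeSet he

theorem isEvenEdgeSet_of_mem_cycleSets (hS : S ∈ cycleSets G) : IsEvenEdgeSet S := by
  obtain ⟨_, c, hc, rfl⟩ := hS
  exact hc.isEvenEdgeSet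

namespace SimpleGraph.Walk.IsCycle

variable {v : V} {w : G.Walk v v}

theorem eq_or_eq_symmDiff_of_sdiff_eq (hw : w.IsCycle) {S₁ S₂ : Set (Sym2 V)}
    (h₁ : S₁ ∈ cycleSets G) (h₂ : S₂ ∈ cycleSets G)
    (h : S₁ \ {e | e ∈ w.edges} = S₂ \ {e | e ∈ w.edges}) :
    S₂ = S₁ ∨ S₂ = S₁ ∆ {e | e ∈ w.edges} := by
  have hsub : S₁ ∆ S₂ ⊆ {e | e ∈ w.edges} := by
    intro e he
    by_contra he'
    have hiff : e ∈ S₁ ↔ e ∈ S₂ := by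
      simpa only [Set.mem_sdiff, he', not_false_eq_true, and_true] using Set.ext_iff.1 h e
    rw [Set.mem_symmDiff, hiff] at he
    tauto
  have heven := (isEvenEdgeSet_of_mem_cycleSets h₁).symmDiff (finite_of_mem_cycleSets h₁)
    (finite_of_mem_cycleSets h₂) (isEvenEdgeSet_of_mem_cycleSets h₂)
  refine (hw.eq_empty_or_eq_of_isEvenEdgeSet hsub heven).imp (fun h' => ?_) (fun h' => ?_)
  · exact (symmDiff_eq_bot.1 h').symm
  · rw [← h', symmDiff_symmDiff_cancel_left]

theorem ncard_cycleSets_sdiff_eq_le_two (hw : w.IsCycle) (K : Set (Sym2 V)) :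
    {S ∈ cycleSets G | S \ {e | e ∈ w.edges} = K}.ncard ≤ 2 := by
  obtain h | ⟨S₁, h₁, hK⟩ := Set.eq_empty_or_nonempty
    {S ∈ cycleSets G | S \ {e | e ∈ w.edges} = K}
  · simp [h]
  have hsub : {S ∈ cycleSets G | S \ {e | e ∈ w.edges} = K} ⊆ {S₁, S₁ ∆ {e | e ∈ w.edges}} :=
    fun S₂ h₂ => hw.eq_or_eq_symmDiff_of_sdiff_eq h₁ h₂.1 (hK.trans h₂.2.symm)
  calc _ ≤ _ := Set.ncard_le_ncard hsub (Set.toFinite _)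
    _ ≤ _ := Set.ncard_insert_le _ _
    _ = 2 := by rw [Set.ncard_singleton]

theorem ncard_cycleSets_sdiff_eq_empty_le_one (hw : w.IsCycle) :
    {S ∈ cycleSets G | S \ {e | e ∈ w.edges} = ∅}.ncard ≤ 1 := by
  have hsub : {S ∈ cycleSets G | S \ {e | e ∈ w.edges} = ∅} ⊆ {{e | e ∈ w.edges}} :=
    fun S hS => (hw.eq_empty_or_eq_of_isEvenEdgeSet (Set.sdiff_eq_empty.1 hS.2)
      (isEvenEdgeSet_of_mem_cycleSets hS.1)).resolve_left (nonempty_of_mem_cycleSets hS.1).ne_empty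
  exact (Set.ncard_le_ncard hsub (Set.toFinite _)).trans_eq (Set.ncard_singleton _)

end SimpleGraph.Walk.IsCycle

end cycleSets

/-- Shi's theorem: in a Hamiltonian graph (Hamiltonian cycle plus `k` chords),
for each fixed subset `K` of the chords there are at most 2 cycles whose chord
set is exactly `K`; consequently the total number of cycles is at most `2^(k+1) - 1`. -/
theorem stmt_4 {n k : ℕ} (G : SimpleGraph (Fin n))
    (v : Fin n) (w : G.Walk v v) (hw : w.IsHamiltonianCycle)
    (hk : (G.edgeSet \ {e | e ∈ w.edges}).ncard = k) :
    (∀ K ⊆ G.edgeSet \ {e | e ∈ w.edges},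
      ({s ∈ cycleSets G | s \ {e | e ∈ w.edges} = K}).ncard ≤ 2) ∧
    (cycleSets G).ncard ≤ 2 ^ (k + 1) - 1 := by
  have hc := hw.isCycle
  refine ⟨fun K _ => hc.ncard_cycleSets_sdiff_eq_le_two K, ?_⟩
  have hcount := Set.ncard_le_two_mul_ncard_sub_one (Set.toFinite (cycleSets G))
    (Set.toFinite (𝒫 (G.edgeSet \ {e | e ∈ w.edges}))) (f := (· \ {e | e ∈ w.edges}))
    (fun S hS => Set.sdiff_subset_sdiff_left (subset_edgeSet_of_mem_cycleSets hS))
    (Set.empty_subset _) hc.ncard_cycleSets_sdiff_eq_empty_le_one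
    (fun K _ => hc.ncard_cycleSets_sdiff_eq_le_two K)
  rwa [Set.ncard_powerset, hk, ← pow_succ'] at hcount
end

section
/- Let G be a pancyclic graph with n > 6 vertices, Hamiltonian cycle H, and let A be an arc of H (a maximal path in H whose interior vertices have degree 2 in G) such that no chord joins the two endpoints of A and |A| ≥ (n−1)/2 edges. Then the graph G_A obtained from G by contracting one edge of A is pancyclic on n−1 vertices. -/
open SimpleGraph

/-- Contract the edge `{u, v}` of `G`: delete `u` and attach its neighbors to `v`. -/
def contractEdge {V : Type*} (G : SimpleGraph V) (u v : V) :
    SimpleGraph {x : V // x ≠ u} where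
  Adj a b := a ≠ b ∧
    (G.Adj a b ∨ ((a : V) = v ∧ G.Adj u b) ∨ ((b : V) = v ∧ G.Adj a u))
  symm := ⟨by
    rintro a b ⟨hab, h⟩
    refine ⟨hab.symm, ?_⟩
    rcases h with h | ⟨h1, h2⟩ | ⟨h1, h2⟩
    · exact Or.inl h.symm
    · exact Or.inr (Or.inr ⟨h1, h2.symm⟩)
    · exact Or.inr (Or.inl ⟨h1, h2.symm⟩)⟩
  loopless := ⟨fun a h => h.1 rfl⟩

/-- `a, a+1, …, a+L` is an arc of the standard Hamiltonian cycle `0,1,…,n-1` of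
`G` on `ZMod n`: a maximal path of the cycle all of whose interior vertices have
degree 2 (maximality: the two endpoints have degree greater than 2). -/
def IsArc {n : ℕ} (G : SimpleGraph (ZMod n)) (a : ZMod n) (L : ℕ) : Prop :=
  L < n ∧
  (∀ t : ℕ, 0 < t → t < L → (G.neighborSet (a + (t : ZMod n))).ncard = 2) ∧
  2 < (G.neighborSet a).ncard ∧ 2 < (G.neighborSet (a + (L : ZMod n))).ncard

/-! Contracting the edge `(a, a + 1)` deletes the degree-two vertex `a + 1` and joins `a` to
`a + 2`. A `k`-cycle of `G` avoiding `a + 1` survives the contraction, and a `(k + 1)`-cycle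
through `a + 1` becomes a `k`-cycle using the new edge. Both fail only if some `k`-cycle passes
through `a + 1` while some `(k + 1)`-cycle avoids it. But a cycle through `a + 1` runs along the
whole arc and, as there is no chord between its ends, needs at least two further edges: its
length is at least `L + 2`. A cycle avoiding `a + 1` misses the `L - 1` interior vertices, so its
length is at most `n - L + 1`, and `n - L + 1 ≤ L + 2` is exactly `2 L ≥ n - 1`. -/

namespace SimpleGraph

variable {V : Type*} {G : SimpleGraph V}

namespace Walk

variable {s : Set V}

@[simp] lemma length_induce {u v : V} (w : G.Walk u v) (hw : ∀ x ∈ w.support, x ∈ s) :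
    (w.induce s hw).length = w.length := by
  induction w <;> simp [*]

lemma IsPath.induce {u v : V} {w : G.Walk u v} (hp : w.IsPath) (hw : ∀ x ∈ w.support, x ∈ s) :
    (w.induce s hw).IsPath :=
  (isPath_map_iff_of_injective (Embedding.induce (G := G) s).injective).mp
    ((map_induce w hw).symm ▸ hp)

lemma IsCycle.induce {u : V} {w : G.Walk u u} (hc : w.IsCycle) (hw : ∀ x ∈ w.support, x ∈ s) :
    (w.induce s hw).IsCycle :=
  (isCycle_map_iff_of_injective (Embedding.induce (G := G) s).injective).mp
    ((map_induce w hw).symm ▸ hc)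

lemma IsCycle.length_add_card_le [Fintype V] {u : V} {c : G.Walk u u} (hc : c.IsCycle)
    {S : Finset V} (hS : ∀ x ∈ S, x ∉ c.support) : c.length + S.card ≤ Fintype.card V := by
  classical
  have hdisj : Disjoint c.support.tail.toFinset S := Finset.disjoint_left.mpr
    fun x hx hxS => hS x hxS (List.mem_of_mem_tail (List.mem_toFinset.mp hx))
  have hcard : c.support.tail.toFinset.card = c.length := by
    rw [List.toFinset_card_of_nodup hc.support_nodup, List.length_tail, length_support]; rfl
  rw [← hcard, ← Finset.card_union_of_disjoint hdisj]
  exact Finset.card_le_univ _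

lemma IsCycle.exists_isPath_between_adj {u : V} {c : G.Walk u u} (hc : c.IsCycle) :
    ∃ (x y : V) (r : G.Walk x y), G.Adj u x ∧ G.Adj u y ∧ r.IsPath ∧ u ∉ r.support ∧
      r.length + 2 = c.length ∧ ∀ z ∈ r.support, z ∈ c.support := by
  cases c with
  | nil => exact absurd rfl hc.ne_nil
  | cons h q =>
    obtain ⟨hq, -⟩ := (cons_isCycle_iff q h).mp hc
    obtain ⟨x, hux, r, hqr⟩ := exists_eq_cons_of_ne h.ne q.reverse
    have hpath : (cons hux r).IsPath := hqr ▸ hq.reverse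
    obtain ⟨hr, hu⟩ := cons_isPath_iff hux r |>.mp hpath
    refine ⟨x, _, r, hux, h, hr, hu, ?_, fun z hz => ?_⟩
    · have := congrArg length hqr
      simp only [length_reverse, length_cons] at this ⊢
      omega
    · have : z ∈ q.reverse.support := hqr ▸ List.mem_cons_of_mem _ hz
      exact List.mem_cons_of_mem _ (by simpa using this)

lemma IsCycle.exists_isPath_of_neighborSet_eq {x u v w : V} {c : G.Walk x x} (hc : c.IsCycle)
    (hu : u ∈ c.support) (hN : G.neighborSet u = {v, w}) :
    ∃ r : G.Walk w v, r.IsPath ∧ u ∉ r.support ∧ r.length + 2 = c.length ∧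
      ∀ z ∈ r.support, z ∈ c.support := by
  classical
  obtain ⟨y, z, r, hy, hz, hr, hur, hlen, hsup⟩ := (hc.rotate hu).exists_isPath_between_adj
  simp only [length_rotate, mem_support_rotate_iff] at hlen hsup
  have hyz : y ≠ z := fun h =>
    not_nil_iff_lt_length.mpr (by linarith [hc.three_le_length]) (hr.nil_iff_eq.mpr h)
  have hy' : y = v ∨ y = w := by simpa [← mem_neighborSet, hN] using hy
  have hz' : z = v ∨ z = w := by simpa [← mem_neighborSet, hN] using hz
  rcases hy' with rfl | rfl <;> rcases hz' with rfl | rfl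
  · exact absurd rfl hyz
  · exact ⟨r.reverse, hr.reverse, by simpa using hur, by simpa using hlen, by simpa using hsup⟩
  · exact ⟨r, hr, hur, hlen, hsup⟩
  · exact absurd rfl hyz

end Walk

open Walk

lemma induce_le_contractEdge (G : SimpleGraph V) (u v : V) :
    G.induce {x | x ≠ u} ≤ contractEdge G u v :=
  fun _ _ h => ⟨h.ne, Or.inl h⟩

lemma hasCycleLength_contractEdge_of_isCycle {u v x : V} {c : G.Walk x x} (hc : c.IsCycle)
    (hu : u ∉ c.support) : HasCycleLength (contractEdge G u v) c.length := by
  have hs : ∀ y ∈ c.support, y ∈ {x | x ≠ u} := fun y hy h => hu (h ▸ hy)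
  exact ⟨_, (c.induce _ hs).mapLe (induce_le_contractEdge G u v),
    (hc.induce hs).mapLe _, by simp⟩

/-- Contracting `u` into `v` turns a path from a neighbour `w` of `u` to `v` into a cycle
closed by the new edge `vw`. -/
lemma hasCycleLength_contractEdge_of_isPath {u v w : V} {r : G.Walk w v} (hr : r.IsPath)
    (hu : u ∉ r.support) (huw : G.Adj u w) (hlen : 2 ≤ r.length) :
    HasCycleLength (contractEdge G u v) (r.length + 1) := by
  have hs : ∀ y ∈ r.support, y ∈ {x | x ≠ u} := fun y hy h => hu (h ▸ hy)
  set r' := (r.induce _ hs).mapLe (induce_le_contractEdge G u v)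
  have hr' : r'.IsPath := (hr.induce hs).mapLe _
  have hvw : v ≠ w := fun h => not_nil_iff_lt_length.mpr (by omega) (hr.nil_iff_eq.mpr h.symm)
  have hadj : (contractEdge G u v).Adj ⟨v, hs v r.end_mem_support⟩
      ⟨w, hs w r.start_mem_support⟩ := ⟨by simpa using hvw, Or.inr (Or.inl ⟨rfl, huw⟩)⟩
  refine ⟨_, cons hadj r', (cons_isCycle_iff r' hadj).mpr ⟨hr', fun he => ?_⟩, by simp [r']⟩
  have := hr'.length_eq_one_of_mem_edges (Sym2.eq_swap ▸ he)
  simp only [r', length_mapLe, length_induce] at this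
  omega

theorem Pancyclic.contractEdge [Fintype V] [DecidableEq V] (hG : Pancyclic G) {u v w : V}
    (hN : G.neighborSet u = {v, w})
    (hlen : ∀ ⦃x y : V⦄ (c : G.Walk x x) (c' : G.Walk y y), c.IsCycle → c'.IsCycle →
      u ∈ c.support → u ∉ c'.support → c'.length ≤ c.length) :
    Pancyclic (contractEdge G u v) := by
  intro k hk3 hk
  have hcard : Fintype.card {x // x ≠ u} = Fintype.card V - 1 := by
    simp [Fintype.card_subtype_compl]
  obtain ⟨x, c, hc, rfl⟩ := hG k hk3 (by omega)
  by_cases hu : u ∈ c.support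
  · obtain ⟨y, c', hc', hc'len⟩ := hG (c.length + 1) (by omega) (by omega)
    by_cases hu' : u ∈ c'.support
    · obtain ⟨r, hr, hur, hrlen, -⟩ := hc'.exists_isPath_of_neighborSet_eq hu' hN
      have := hasCycleLength_contractEdge_of_isPath hr hur (by simp [← mem_neighborSet, hN])
        (by omega)
      rwa [show r.length + 1 = c.length by omega] at this
    · exact absurd (hlen c c' hc hc' hu hu') (by omega)
  · exact hasCycleLength_contractEdge_of_isCycle hc hu

end SimpleGraph

open SimpleGraph Walk

lemma ZMod.natCast_eq_natCast_iff_of_lt {n i j : ℕ} (hi : i < n) (hj : j < n) :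
    (i : ZMod n) = j ↔ i = j := by
  rw [ZMod.natCast_eq_natCast_iff', Nat.mod_eq_of_lt hi, Nat.mod_eq_of_lt hj]

lemma ZMod.add_natCast_ne_self {n t : ℕ} (a : ZMod n) (ht : 0 < t) (htn : t < n) :
    a + t ≠ a := fun h => by
  have := (ZMod.natCast_eq_natCast_iff_of_lt htn (Nat.zero_lt_of_lt htn)).mp
    (by simpa using h : (t : ZMod n) = ((0 : ℕ) : ZMod n))
  omega

namespace IsArc

variable {n : ℕ} {G : SimpleGraph (ZMod n)} {a : ZMod n} {L : ℕ}

lemma neighborSet_eq (hH : ∀ i : ZMod n, G.Adj i (i + 1)) (hA : IsArc G a L) {t : ℕ}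
    (ht : 0 < t) (htL : t < L) :
    G.neighborSet (a + t) = {a + t - 1, a + t + 1} := by
  have hLn := hA.1
  have hcard := hA.2.1 t ht htL
  have hne : a + t - 1 ≠ a + t + 1 := fun h => by
    have h2 : ((2 : ℕ) : ZMod n) = ((0 : ℕ) : ZMod n) := by push_cast; linear_combination -h
    have := (ZMod.natCast_eq_natCast_iff_of_lt (by omega) (by omega)).mp h2
    omega
  refine (Set.eq_of_subset_of_ncard_le ?_ ?_
    (Set.finite_of_ncard_ne_zero (by omega))).symm
  · rintro z (rfl | rfl)
    · simpa using (hH (a + t - 1)).symm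
    · exact hH (a + t)
  · rw [hcard, Set.ncard_pair hne]

/-- A path leaving the arc at `a + t` towards `a + t + 1` and ending at `a` must run along the
rest of the arc and then use at least one more edge, since there is no chord `a (a + L)`. -/
lemma le_length_add_of_isPath (hH : ∀ i : ZMod n, G.Adj i (i + 1)) (hA : IsArc G a L)
    (hnochord : ¬ G.Adj a (a + L)) {t : ℕ} (ht : 0 < t) (htL : t ≤ L) {p : G.Walk (a + t) a}
    (hp : p.IsPath) (hpt : a + t - 1 ∉ p.support) : L + 2 ≤ p.length + t := by
  have hLn := hA.1
  induction hd : L - t generalizing t with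
  | zero =>
    obtain rfl : t = L := by omega
    by_contra! hlen
    have : p.length < 2 := by omega
    interval_cases h : p.length
    · exact ZMod.add_natCast_ne_self a ht hLn (eq_of_length_eq_zero h)
    · exact hnochord (adj_of_length_eq_one h).symm
  | succ d ih =>
    obtain ⟨z, hz, q, rfl⟩ := exists_eq_cons_of_ne (ZMod.add_natCast_ne_self a ht (by omega)) p
    obtain ⟨hq, hq'⟩ := (cons_isPath_iff hz q).mp hp
    have hz' : z = a + t + 1 := by
      have : z ∈ G.neighborSet (a + t) := hz
      rw [neighborSet_eq hH hA ht (by omega)] at this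
      rcases this with rfl | h
      · exact absurd (List.mem_cons_of_mem _ q.start_mem_support) hpt
      · exact h
    have hcast : a + t + 1 = a + ((t + 1 : ℕ) : ZMod n) := by push_cast; ring
    subst hz'
    have := ih (t := t + 1) (by omega) (by omega) (p := q.copy hcast rfl) (by simpa using hq)
      (by rwa [support_copy, Nat.cast_succ, ← add_assoc, add_sub_cancel_right]) (by omega)
    simp only [length_copy] at this
    simp only [length_cons]
    omega

lemma neighborSet_add_one (hH : ∀ i : ZMod n, G.Adj i (i + 1)) (hA : IsArc G a L)
    (hL : 2 ≤ L) : G.neighborSet (a + 1) = {a, a + 1 + 1} := by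
  simpa using neighborSet_eq hH hA (t := 1) one_pos hL

lemma le_length_of_isCycle (hH : ∀ i : ZMod n, G.Adj i (i + 1)) (hA : IsArc G a L)
    (hnochord : ¬ G.Adj a (a + L)) (hL : 2 ≤ L) {x : ZMod n} {c : G.Walk x x} (hc : c.IsCycle)
    (hu : a + 1 ∈ c.support) : L + 2 ≤ c.length := by
  obtain ⟨r, hr, hur, hlen, -⟩ :=
    hc.exists_isPath_of_neighborSet_eq hu (neighborSet_add_one hH hA hL)
  have hcast : a + 1 + 1 = a + ((2 : ℕ) : ZMod n) := by push_cast; ring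
  have := le_length_add_of_isPath hH hA hnochord two_pos hL (p := r.copy hcast rfl)
    (by simpa using hr)
    (by rwa [support_copy, show a + ((2 : ℕ) : ZMod n) - 1 = a + 1 by push_cast; ring])
  simp only [length_copy] at this
  omega

/-- A cycle through an interior vertex of the arc runs along the arc, so it passes `a + 1`. -/
lemma mem_support_of_isCycle (hH : ∀ i : ZMod n, G.Adj i (i + 1)) (hA : IsArc G a L)
    {x : ZMod n} {c : G.Walk x x} (hc : c.IsCycle) {t : ℕ} (ht : 0 < t) (htL : t < L)
    (hmem : a + t ∈ c.support) : a + 1 ∈ c.support := by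
  induction t with
  | zero => omega
  | succ t ih =>
    rcases Nat.eq_zero_or_pos t with rfl | ht'
    · simpa using hmem
    obtain ⟨r, -, -, -, hsup⟩ :=
      hc.exists_isPath_of_neighborSet_eq hmem (neighborSet_eq hH hA ht htL)
    refine ih ht' (by omega) ?_
    simpa only [Nat.cast_succ, ← add_assoc, add_sub_cancel_right] using
      hsup _ r.end_mem_support

lemma length_add_le_of_isCycle [NeZero n] (hH : ∀ i : ZMod n, G.Adj i (i + 1))
    (hA : IsArc G a L) {x : ZMod n} {c : G.Walk x x} (hc : c.IsCycle)
    (hu : a + 1 ∉ c.support) : c.length + L ≤ n + 1 := by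
  have hLn := hA.1
  have hinj : Set.InjOn (fun t : ℕ => a + t) (Finset.Ioo 0 L) := fun i hi j hj h =>
    (ZMod.natCast_eq_natCast_iff_of_lt (by simp at hi; omega) (by simp at hj; omega)).mp
      (add_left_cancel h)
  have := hc.length_add_card_le (S := (Finset.Ioo 0 L).image fun t : ℕ => a + t) (by
    simp only [Finset.mem_image, Finset.mem_Ioo]
    rintro _ ⟨t, ⟨ht, htL⟩, rfl⟩ hmem
    exact hu (mem_support_of_isCycle hH hA hc ht htL hmem))
  rw [Finset.card_image_of_injOn hinj, Nat.card_Ioo, ZMod.card] at this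
  omega

end IsArc

/-- If `G` is pancyclic on `n > 6` vertices with the standard Hamiltonian cycle on
`ZMod n`, and `A = (a, a+1, …, a+L)` is an arc with no chord joining its two
endpoints and with `L = |A| ≥ (n-1)/2` edges, then the graph `G_A` obtained by
contracting one edge of `A` is pancyclic on `n - 1` vertices. -/
theorem stmt_8 {n : ℕ} [NeZero n] (hn : 6 < n) (G : SimpleGraph (ZMod n))
    (hH : ∀ i : ZMod n, G.Adj i (i + 1)) (hG : Pancyclic G)
    (a : ZMod n) (L : ℕ) (hA : IsArc G a L)
    (hnochord : ¬ G.Adj a (a + (L : ZMod n)))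
    (hlen : n - 1 ≤ 2 * L) :
    Pancyclic (contractEdge G (a + 1) a) ∧
    Fintype.card {x : ZMod n // x ≠ a + 1} = n - 1 := by
  have hL : 2 ≤ L := by omega
  refine ⟨hG.contractEdge (hA.neighborSet_add_one hH hL) fun _ _ c c' hc hc' hu hu' => ?_,
    by simp [Fintype.card_subtype_compl]⟩
  have := hA.le_length_of_isCycle hH hnochord hL hc hu
  have := hA.length_add_le_of_isCycle hH hc' hu'
  omega
end

section
/- m(14) = 17: the minimum number of edges of a pancyclic graph on 14 vertices is 17. -/
open SimpleGraph Finset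
open scoped symmDiff

/-!
The 14-cycle with chords `v₁v₁₃`, `v₃v₁₄`, `v₉v₁₄` is pancyclic, so `m 14 ≤ 17`.

For the lower bound, let `C` be a Hamiltonian cycle of a pancyclic graph `G` and call the
other edges chords. The edge set of a cycle meets every vertex in an even number of edges. If
two cycles use the same chords, the symmetric difference of their edge sets is a nonempty subset
of `C` with the same parity property; since every vertex of `C` lies on exactly two edges of `C`,
it must be all of `C`. Hence at most two cycles use any given set of chords, and with `c` chords
`G` has at most `2 ^ (c + 1)` cycle lengths. Twelve lengths `3, …, 14` force `c ≥ 3`, i.e. at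
least `17` edges.
-/

section Finset

variable {α : Type*} [DecidableEq α]

theorem Finset.even_card_symmDiff {A B : Finset α} (hA : Even #A) (hB : Even #B) :
    Even #(A ∆ B) := by
  obtain ⟨a, ha⟩ := hA
  obtain ⟨b, hb⟩ := hB
  have hunion := card_union_add_card_inter A B
  have hsub := card_le_card (inter_subset_union (s := A) (t := B))
  have hsymm : #(A ∆ B) = #(A ∪ B) - #(A ∩ B) := by
    rw [symmDiff_eq_sup_sdiff_inf]
    exact card_sdiff_of_subset inter_subset_union
  exact ⟨a + b - #(A ∩ B), by omega⟩

theorem Finset.symmDiff_subset_of_sdiff_eq {A B H : Finset α} (h : A \ H = B \ H) :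
    A ∆ B ⊆ H := by
  intro e he
  by_contra hH
  have hiff := congrArg (e ∈ ·) h
  simp only [mem_sdiff, hH, not_false_eq_true, and_true, eq_iff_iff] at hiff
  rw [mem_symmDiff] at he
  tauto

end Finset

namespace SimpleGraph

variable {V : Type*} {G : SimpleGraph V}

theorem Walk.forall_mem_support_of_edges {P : V → Prop} {u v : V} (p : G.Walk u v) (hu : P u)
    (hstep : ∀ x y, s(x, y) ∈ p.edges → P x → P y) : ∀ x ∈ p.support, P x := by
  induction p with
  | nil => simpa using hu
  | @cons a b c h q ih =>
    have hb : P b := hstep a b (by simp) hu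
    simpa [hu] using ih hb fun x y hxy => hstep x y (by simp [hxy])

theorem Walk.IsPath.hasCycleLength_cons {v w : V} {p : G.Walk v w} (hp : p.IsPath)
    (h : G.Adj w v) (hlen : 2 ≤ p.length) : HasCycleLength G (p.length + 1) :=
  ⟨w, .cons h p, Walk.isCycle_iff_isPath_tail_and_le_length.mpr
    ⟨by simpa using hp, by simp; omega⟩, rfl⟩

theorem hasCycleLength_of_isChain (v : V) (l : List V)
    (h : (v :: l ++ [v]).IsChain G.Adj ∧ (v :: l).Nodup ∧ 2 ≤ l.length) :
    HasCycleLength G (l.length + 1) := by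
  obtain ⟨hchain, hnd, hl⟩ := h
  obtain ⟨hpath, -, hclose⟩ := List.isChain_append.mp hchain
  have hq := Walk.IsPath.mk' (p := Walk.ofSupport (v :: l) (List.cons_ne_nil v l) hpath)
    (by rwa [Walk.support_ofSupport])
  have hlen : (Walk.ofSupport (v :: l) (List.cons_ne_nil v l) hpath).length = l.length := by
    rw [Walk.length_ofSupport, List.length_cons, Nat.add_sub_cancel]
  rw [← hlen]
  exact hq.hasCycleLength_cons (hclose _ (List.getLast?_eq_some_getLast _) _ rfl) (hlen ▸ hl)

variable [DecidableEq V]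

def EvenDegree (S : Finset (Sym2 V)) : Prop :=
  ∀ x : V, Even #{e ∈ S | x ∈ e}

theorem EvenDegree.symmDiff {S T : Finset (Sym2 V)} (hS : EvenDegree S) (hT : EvenDegree T) :
    EvenDegree (S ∆ T) := by
  intro x
  have hfilter : {e ∈ S ∆ T | x ∈ e} = {e ∈ S | x ∈ e} ∆ {e ∈ T | x ∈ e} := by
    ext e
    simp only [mem_filter, mem_symmDiff]
    tauto
  rw [hfilter]
  exact even_card_symmDiff (hS x) (hT x)

namespace Walk

theorem card_filter_mem_edges_toFinset {u v : V} (p : G.Walk u v) (x : V) :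
    #{e ∈ p.edges.toFinset | x ∈ e} = (p.toSubgraph.neighborSet x).ncard := by
  rw [← Set.ncard_coe_finset]
  symm
  refine Set.ncard_congr (fun y _ => s(x, y)) ?_ ?_ ?_
  · intro y hy
    simpa using adj_toSubgraph_iff_mem_edges.mp hy
  · intro y z _ _ h
    exact Sym2.congr_right.mp h
  · intro e he
    obtain ⟨he, hx⟩ := mem_filter.mp he
    refine ⟨Sym2.Mem.other hx, ?_, Sym2.other_spec hx⟩
    rw [Subgraph.mem_neighborSet, adj_toSubgraph_iff_mem_edges, Sym2.other_spec hx]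
    exact List.mem_toFinset.mp he

theorem edges_toFinset_subset_edgeFinset [Fintype G.edgeSet] {u v : V} (p : G.Walk u v) :
    p.edges.toFinset ⊆ G.edgeFinset := fun _ he =>
  mem_edgeFinset.mpr (p.edges_subset_edgeSet (List.mem_toFinset.mp he))

namespace IsCycle

variable {u : V} {p : G.Walk u u}

theorem card_edges_toFinset (hp : p.IsCycle) : #p.edges.toFinset = p.length := by
  rw [List.toFinset_card_of_nodup hp.isTrail.edges_nodup, length_edges]

theorem card_filter_mem_edges_toFinset (hp : p.IsCycle) {x : V} (hx : x ∈ p.support) :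
    #{e ∈ p.edges.toFinset | x ∈ e} = 2 := by
  rw [p.card_filter_mem_edges_toFinset, hp.ncard_neighborSet_toSubgraph_eq_two hx]

theorem evenDegree_edges_toFinset (hp : p.IsCycle) : EvenDegree p.edges.toFinset := by
  intro x
  by_cases hx : x ∈ p.support
  · rw [hp.card_filter_mem_edges_toFinset hx]
    exact even_two
  · rw [filter_false_of_mem fun e he hxe =>
      hx (mem_support_of_mem_edges (List.mem_toFinset.mp he) hxe)]
    exact Even.zero

/- An even edge set meeting a cycle vertex uses both of its cycle edges there, so, walking
around the cycle from such a vertex, it contains every edge of the cycle. -/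
theorem eq_edges_toFinset_of_evenDegree (hp : p.IsCycle) {T : Finset (Sym2 V)}
    (hTp : T ⊆ p.edges.toFinset) (hT : EvenDegree T) (hne : T.Nonempty) :
    T = p.edges.toFinset := by
  set H := p.edges.toFinset
  have saturated : ∀ x, ∀ e ∈ T, x ∈ e → {f ∈ H | x ∈ f} ⊆ T := by
    intro x e he hx
    have hsub : {f ∈ T | x ∈ f} ⊆ {f ∈ H | x ∈ f} := filter_subset_filter _ hTp
    have hxp : x ∈ p.support := mem_support_of_mem_edges (List.mem_toFinset.mp (hTp he)) hx
    have hpos : 0 < #{f ∈ T | x ∈ f} := card_pos.mpr ⟨e, mem_filter.mpr ⟨he, hx⟩⟩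
    have hle : #{f ∈ H | x ∈ f} ≤ #{f ∈ T | x ∈ f} := by
      obtain ⟨k, hk⟩ := hT x
      rw [hp.card_filter_mem_edges_toFinset hxp]
      omega
    rw [← eq_of_subset_of_card_le hsub hle]
    exact filter_subset _ _
  obtain ⟨e₀, he₀⟩ := hne
  obtain ⟨x₀, hx₀⟩ : ∃ x, x ∈ e₀ := ⟨e₀.out.1, Sym2.out_fst_mem e₀⟩
  have hx₀p : x₀ ∈ p.support := mem_support_of_mem_edges (List.mem_toFinset.mp (hTp he₀)) hx₀
  set q := p.rotate (u := x₀) hx₀p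
  have hq : ∀ e, e ∈ q.edges ↔ e ∈ H := fun e => by
    rw [(p.rotate_edges (u := x₀) hx₀p).perm.mem_iff, List.mem_toFinset]
  have hall : ∀ x ∈ q.support, {f ∈ H | x ∈ f} ⊆ T :=
    q.forall_mem_support_of_edges (saturated x₀ e₀ he₀ hx₀) fun x y hxy hx =>
      saturated y _ (hx (mem_filter.mpr ⟨(hq _).mp hxy, Sym2.mem_mk_left x y⟩))
        (Sym2.mem_mk_right x y)
  refine Subset.antisymm hTp fun f hf => ?_
  induction f using Sym2.ind with
  | _ y z =>
    exact hall y (q.fst_mem_support_of_mem_edges ((hq _).mpr hf))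
      (mem_filter.mpr ⟨hf, Sym2.mem_mk_left y z⟩)

theorem eq_of_sdiff_edges_toFinset_eq (hp : p.IsCycle) {A B C : Finset (Sym2 V)}
    (hA : EvenDegree A) (hB : EvenDegree B) (hC : EvenDegree C)
    (hAB : A \ p.edges.toFinset = B \ p.edges.toFinset)
    (hAC : A \ p.edges.toFinset = C \ p.edges.toFinset) (hab : A ≠ B) (hac : A ≠ C) :
    B = C := by
  have hB' := hp.eq_edges_toFinset_of_evenDegree (symmDiff_subset_of_sdiff_eq hAB)
    (hA.symmDiff hB) (symmDiff_nonempty.mpr hab)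
  have hC' := hp.eq_edges_toFinset_of_evenDegree (symmDiff_subset_of_sdiff_eq hAC)
    (hA.symmDiff hC) (symmDiff_nonempty.mpr hac)
  exact symmDiff_right_injective A (hB'.trans hC'.symm)

end IsCycle

end Walk

variable [Fintype V] [DecidableRel G.Adj]

theorem HasCycleLength.exists_evenDegree {k : ℕ} (h : HasCycleLength G k) :
    ∃ S ⊆ G.edgeFinset, #S = k ∧ EvenDegree S := by
  obtain ⟨v, q, hq, rfl⟩ := h
  exact ⟨q.edges.toFinset, q.edges_toFinset_subset_edgeFinset, hq.card_edges_toFinset,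
    hq.evenDegree_edges_toFinset⟩

theorem Walk.IsCycle.card_le_two_pow_of_hasCycleLength {u : V} {p : G.Walk u u}
    (hp : p.IsCycle) {L : Finset ℕ} (hL : ∀ k ∈ L, HasCycleLength G k) :
    #L ≤ 2 ^ (#G.edgeFinset - p.length + 1) := by
  set H := p.edges.toFinset
  set E := G.edgeFinset
  choose! S hSE hScard hSeven using fun k hk => (hL k hk).exists_evenDegree
  have hmaps : ∀ k ∈ L, S k \ H ∈ (E \ H).powerset := fun k hk =>
    mem_powerset.mpr (sdiff_subset_sdiff (hSE k hk) le_rfl)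
  by_contra! hlt
  have hfew : #(E \ H).powerset * 2 < #L := by
    rwa [card_powerset, card_sdiff_of_subset p.edges_toFinset_subset_edgeFinset,
      hp.card_edges_toFinset, ← pow_succ]
  obtain ⟨y, -, hy⟩ := exists_lt_card_fiber_of_mul_lt_card_of_maps_to hmaps hfew
  obtain ⟨a, ha, b, hb, c, hc, hab, hac, hbc⟩ := two_lt_card.mp hy
  simp only [mem_filter] at ha hb hc
  have hSne : ∀ {i j}, i ∈ L → j ∈ L → i ≠ j → S i ≠ S j := fun hi hj hij h =>
    hij (by rw [← hScard _ hi, ← hScard _ hj, h])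
  have hSbc : S b = S c := hp.eq_of_sdiff_edges_toFinset_eq (hSeven a ha.1) (hSeven b hb.1)
    (hSeven c hc.1) (ha.2.trans hb.2.symm) (ha.2.trans hc.2.symm) (hSne ha.1 hb.1 hab)
    (hSne ha.1 hc.1 hac)
  exact hbc (by rw [← hScard b hb.1, ← hScard c hc.1, hSbc])

theorem Pancyclic.card_sub_two_le_two_pow (hG : Pancyclic G) (h3 : 3 ≤ Fintype.card V) :
    Fintype.card V - 2 ≤ 2 ^ (#G.edgeFinset - Fintype.card V + 1) := by
  obtain ⟨u, p, hp, hlen⟩ := hG _ h3 le_rfl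
  have h := hp.card_le_two_pow_of_hasCycleLength (L := Icc 3 (Fintype.card V)) fun k hk =>
    hG k (mem_Icc.mp hk).1 (mem_Icc.mp hk).2
  rwa [Nat.card_Icc, hlen] at h

end SimpleGraph

/- The paper's vertex `vᵢ` is `i - 1` here. -/
def chordedCycle : SimpleGraph (Fin 14) :=
  cycleGraph 14 ⊔ fromEdgeSet {s(0, 12), s(2, 13), s(8, 13)}

instance : DecidableRel chordedCycle.Adj := by
  unfold chordedCycle
  infer_instance

theorem chordedCycle_ncard_edgeSet : chordedCycle.edgeSet.ncard = 17 := by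
  rw [← coe_edgeFinset, Set.ncard_coe_finset]
  decide

theorem chordedCycle_pancyclic : Pancyclic chordedCycle := by
  intro k hk3 hk
  rw [Fintype.card_fin] at hk
  interval_cases k
  · exact hasCycleLength_of_isChain 0 [12, 13] (by decide)
  · exact hasCycleLength_of_isChain 13 [0, 1, 2] (by decide)
  · exact hasCycleLength_of_isChain 0 [1, 2, 13, 12] (by decide)
  · exact hasCycleLength_of_isChain 8 [9, 10, 11, 12, 13] (by decide)
  · exact hasCycleLength_of_isChain 13 [0, 12, 11, 10, 9, 8] (by decide)
  · exact hasCycleLength_of_isChain 2 [3, 4, 5, 6, 7, 8, 13] (by decide)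
  · exact hasCycleLength_of_isChain 2 [13, 8, 9, 10, 11, 12, 0, 1] (by decide)
  · exact hasCycleLength_of_isChain 13 [0, 1, 2, 3, 4, 5, 6, 7, 8] (by decide)
  · exact hasCycleLength_of_isChain 0 [1, 2, 3, 4, 5, 6, 7, 8, 13, 12] (by decide)
  · exact hasCycleLength_of_isChain 2 [3, 4, 5, 6, 7, 8, 9, 10, 11, 12, 13] (by decide)
  · exact hasCycleLength_of_isChain 0 [1, 2, 3, 4, 5, 6, 7, 8, 9, 10, 11, 12] (by decide)
  · exact hasCycleLength_of_isChain 0 [1, 2, 3, 4, 5, 6, 7, 8, 9, 10, 11, 12, 13] (by decide)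

/-- The minimum number of edges of a pancyclic graph on 14 vertices is 17. -/
theorem stmt_14 : m 14 = 17 := by
  classical
  have hmem : 17 ∈ {e | ∃ G : SimpleGraph (Fin 14), Pancyclic G ∧ G.edgeSet.ncard = e} :=
    ⟨chordedCycle, chordedCycle_pancyclic, chordedCycle_ncard_edgeSet⟩
  refine le_antisymm (Nat.sInf_le hmem) (le_csInf ⟨17, hmem⟩ ?_)
  rintro _ ⟨G, hG, rfl⟩
  have h := hG.card_sub_two_le_two_pow (by simp)
  rw [Fintype.card_fin] at h
  rw [← coe_edgeFinset, Set.ncard_coe_finset]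
  by_contra! hlt
  have hpow : 2 ^ (#G.edgeFinset - 14 + 1) ≤ 2 ^ 3 := Nat.pow_le_pow_right two_pos (by omega)
  omega
end

section
/- m(7) = 9: every pancyclic graph on 7 vertices has at least 9 edges, and there exists a pancyclic graph on 7 vertices with exactly 9 edges. -/
/-!
A pancyclic graph on seven vertices contains a Hamiltonian cycle; after relabelling, this is
the standard cycle `cycleGraph 7`, which has seven edges. With at most eight edges there is at
most one chord, and a chord of a 7-cycle at cyclic distance `d ∈ {2, 3}` closes cycles of
lengths only `d + 1` and `8 - d`, so a triangle and a 4-cycle cannot both occur. Conversely, the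
7-cycle with the two chords `0 2` and `0 4` has cycles of all lengths `3, …, 7`.
-/

open SimpleGraph

lemma pancyclic_iff_cycleGraph_isContained {V : Type*} [Fintype V] {G : SimpleGraph V} :
    Pancyclic G ↔ ∀ k, 3 ≤ k → k ≤ Fintype.card V → cycleGraph k ⊑ G :=
  forall₃_congr fun _ h3 _ => (cycleGraph_isContained_iff h3).symm

namespace SimpleGraph

variable {V : Type*} {G H : SimpleGraph V}

lemma cycleGraph_isContained_of_injective {n : ℕ} (x : Fin (n + 2) → V)
    (hx : Function.Injective x) (hadj : ∀ i, G.Adj (x i) (x (i + 1))) :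
    cycleGraph (n + 2) ⊑ G := by
  refine ⟨⟨⟨x, fun {a b} hab => ?_⟩, hx⟩⟩
  rcases cycleGraph_adj.mp hab with h | h
  · rw [sub_eq_iff_eq_add'] at h
    exact h ▸ (hadj b).symm
  · rw [sub_eq_iff_eq_add'] at h
    exact h ▸ hadj a

lemma exists_adj_of_cycleGraph_three_isContained (h : cycleGraph 3 ⊑ G) :
    ∃ a b c, G.Adj a b ∧ G.Adj b c ∧ G.Adj c a := by
  obtain ⟨f⟩ := h
  exact ⟨f 0, f 1, f 2, f.toHom.map_adj (by decide), f.toHom.map_adj (by decide),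
    f.toHom.map_adj (by decide)⟩

lemma exists_adj_of_cycleGraph_four_isContained (h : cycleGraph 4 ⊑ G) :
    ∃ a b c d, a ≠ c ∧ b ≠ d ∧ G.Adj a b ∧ G.Adj b c ∧ G.Adj c d ∧ G.Adj d a := by
  obtain ⟨f⟩ := h
  exact ⟨f 0, f 1, f 2, f 3, f.injective.ne (by decide), f.injective.ne (by decide),
    f.toHom.map_adj (by decide), f.toHom.map_adj (by decide), f.toHom.map_adj (by decide),
    f.toHom.map_adj (by decide)⟩

lemma ncard_edgeSet_cycleGraph (n : ℕ) : (cycleGraph (n + 3)).edgeSet.ncard = n + 3 := by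
  have := (cycleGraph (n + 3)).sum_degrees_eq_twice_card_edges
  simp only [cycleGraph_degree_three_le, Finset.sum_const, Finset.card_univ, Fintype.card_fin,
    smul_eq_mul] at this
  rw [← coe_edgeFinset, Set.ncard_coe_finset]
  omega

lemma ncard_edgeSet_sup_edge [Finite V] {u v : V} (huv : u ≠ v) (h : ¬ G.Adj u v) :
    (G ⊔ edge u v).edgeSet.ncard = G.edgeSet.ncard + 1 := by
  rw [edgeSet_sup, edgeSet_edge_of_ne huv, Set.union_singleton,
    Set.ncard_insert_of_notMem (by rwa [mem_edgeSet])]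

lemma Iso.ncard_edgeSet_eq {W : Type*} {G' : SimpleGraph W} (φ : G ≃g G') :
    G.edgeSet.ncard = G'.edgeSet.ncard :=
  Nat.card_congr φ.mapEdgeSet

lemma IsContained.exists_iso_le [Finite V] (h : H ⊑ G) :
    ∃ G' : SimpleGraph V, Nonempty (G' ≃g G) ∧ H ≤ G' := by
  obtain ⟨f, hf⟩ := isContained_iff_exists_le_comap.mp h
  have hbij : Function.Bijective f := Finite.injective_iff_bijective.mp f.injective
  exact ⟨G.comap f, ⟨⟨Equiv.ofBijective f hbij, Iff.rfl⟩⟩, hf⟩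

lemma exists_le_sup_edge_of_ncard_edgeSet_le [Finite V] [Nonempty V] (hle : H ≤ G)
    (hcard : G.edgeSet.ncard ≤ H.edgeSet.ncard + 1) : ∃ u v, G ≤ H ⊔ edge u v := by
  have hdiff : (G.edgeSet \ H.edgeSet).ncard ≤ 1 := by
    rw [Set.ncard_sdiff (edgeSet_mono hle)]
    omega
  have : Nonempty (Sym2 V) := .map (fun v => s(v, v)) ‹_›
  obtain ⟨e, he⟩ := (Set.ncard_le_one_iff_subset_singleton (Set.toFinite _)).mp hdiff
  induction e using Sym2.ind with
  | _ u v =>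
    refine ⟨u, v, fun a b hab => ?_⟩
    by_cases hH : H.Adj a b
    · exact Or.inl hH
    · exact Or.inr ((adj_edge u v).mpr ⟨(he ⟨hab, hH⟩).symm, hab.ne⟩)

end SimpleGraph

set_option synthInstance.maxSize 2000 in
lemma cycleGraph_seven_sup_edge_not_triangle_and_square (u v : Fin 7) :
    ¬ ((∃ a b c, (cycleGraph 7 ⊔ edge u v).Adj a b ∧ (cycleGraph 7 ⊔ edge u v).Adj b c ∧
          (cycleGraph 7 ⊔ edge u v).Adj c a) ∧
        ∃ a b c d, a ≠ c ∧ b ≠ d ∧ (cycleGraph 7 ⊔ edge u v).Adj a b ∧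
          (cycleGraph 7 ⊔ edge u v).Adj b c ∧ (cycleGraph 7 ⊔ edge u v).Adj c d ∧
          (cycleGraph 7 ⊔ edge u v).Adj d a) := by
  simp only [sup_adj, edge_adj]
  revert u v
  decide +kernel

lemma nine_le_ncard_edgeSet_of_pancyclic {G : SimpleGraph (Fin 7)} (hG : Pancyclic G) :
    9 ≤ G.edgeSet.ncard := by
  have hC := pancyclic_iff_cycleGraph_isContained.mp hG
  obtain ⟨G', ⟨φ⟩, hle⟩ := (hC 7 (by norm_num) (by simp)).exists_iso_le
  by_contra! hlt
  have hcard : G'.edgeSet.ncard ≤ (cycleGraph 7).edgeSet.ncard + 1 := by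
    rw [φ.ncard_edgeSet_eq, ncard_edgeSet_cycleGraph 4]
    omega
  obtain ⟨u, v, hG'⟩ := exists_le_sup_edge_of_ncard_edgeSet_le hle hcard
  have hsub {k : ℕ} (h3 : 3 ≤ k) (h7 : k ≤ 7) : cycleGraph k ⊑ cycleGraph 7 ⊔ edge u v :=
    ((hC k h3 (by simpa using h7)).trans φ.symm.isContained).mono_right hG'
  exact cycleGraph_seven_sup_edge_not_triangle_and_square u v
    ⟨exists_adj_of_cycleGraph_three_isContained (hsub le_rfl (by norm_num)),
      exists_adj_of_cycleGraph_four_isContained (hsub (by norm_num) (by norm_num))⟩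

def cycleSevenWithTwoChords : SimpleGraph (Fin 7) := cycleGraph 7 ⊔ edge 0 2 ⊔ edge 0 4

lemma pancyclic_cycleSevenWithTwoChords : Pancyclic cycleSevenWithTwoChords := by
  rw [pancyclic_iff_cycleGraph_isContained, Fintype.card_fin]
  intro k h3 h7
  interval_cases k
  · exact cycleGraph_isContained_of_injective ![0, 1, 2] (by decide)
      (by simp only [cycleSevenWithTwoChords, sup_adj, edge_adj]; decide)
  · exact cycleGraph_isContained_of_injective ![0, 2, 3, 4] (by decide)
      (by simp only [cycleSevenWithTwoChords, sup_adj, edge_adj]; decide)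
  · exact cycleGraph_isContained_of_injective ![0, 1, 2, 3, 4] (by decide)
      (by simp only [cycleSevenWithTwoChords, sup_adj, edge_adj]; decide)
  · exact cycleGraph_isContained_of_injective ![0, 2, 3, 4, 5, 6] (by decide)
      (by simp only [cycleSevenWithTwoChords, sup_adj, edge_adj]; decide)
  · exact cycleGraph_isContained_of_injective ![0, 1, 2, 3, 4, 5, 6] (by decide)
      (by simp only [cycleSevenWithTwoChords, sup_adj, edge_adj]; decide)

lemma ncard_edgeSet_cycleSevenWithTwoChords : cycleSevenWithTwoChords.edgeSet.ncard = 9 := by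
  rw [cycleSevenWithTwoChords,
    ncard_edgeSet_sup_edge (by decide) (by simp only [sup_adj, edge_adj]; decide),
    ncard_edgeSet_sup_edge (by decide) (by decide), ncard_edgeSet_cycleGraph 4]

/-- `m 7 = 9`: every pancyclic graph on 7 vertices has at least 9 edges, and there
is a pancyclic graph on 7 vertices with exactly 9 edges. -/
theorem stmt_15 :
    (∀ G : SimpleGraph (Fin 7), Pancyclic G → 9 ≤ G.edgeSet.ncard) ∧
    (∃ G : SimpleGraph (Fin 7), Pancyclic G ∧ G.edgeSet.ncard = 9) ∧
    m 7 = 9 := by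
  have hlow : ∀ G : SimpleGraph (Fin 7), Pancyclic G → 9 ≤ G.edgeSet.ncard :=
    fun _ => nine_le_ncard_edgeSet_of_pancyclic
  have hex : ∃ G : SimpleGraph (Fin 7), Pancyclic G ∧ G.edgeSet.ncard = 9 :=
    ⟨_, pancyclic_cycleSevenWithTwoChords, ncard_edgeSet_cycleSevenWithTwoChords⟩
  exact ⟨hlow, hex, IsLeast.csInf_eq ⟨hex, by rintro _ ⟨G, hG, rfl⟩; exact hlow G hG⟩⟩
end
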